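/- Let G be a finite connected simple graph with at least two vertices. Then α(G) ≤ α'(G), i.e. the independence number of G is at most the independence number of its edge-clique graph. -/

import Mathlib

namespace ECG

/-- The edge-clique graph `K_e(G)`: its vertices are the edges of `G`, and two distinct
edges are adjacent exactly when all their endpoints are pairwise adjacent in `G`
(i.e. the two edges lie in a common clique of `G`). -/
def edgeCliqueGraph {V : Type*} (G : SimpleGraph V) : SimpleGraph G.edgeSet where
  Adj e f := e ≠ f ∧ G.IsClique {v | v ∈ (e : Sym2 V) ∨ v ∈ (f : Sym2 V)}
  symm := ⟨by
    rintro e f ⟨hne, hcl⟩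
    refine ⟨hne.symm, ?_⟩
    have h : {v | v ∈ (f : Sym2 V) ∨ v ∈ (e : Sym2 V)} =
        {v | v ∈ (e : Sym2 V) ∨ v ∈ (f : Sym2 V)} := by
      ext v; exact or_comm
    rw [h]; exact hcl⟩
  loopless := ⟨fun e h => h.1 rfl⟩

/-- A set of vertices is independent when no two of its members are adjacent. -/
def IsIndepSet {V : Type*} (G : SimpleGraph V) (S : Set V) : Prop :=
  S.Pairwise fun a b => ¬ G.Adj a b

/-- The independence number `α(G)`: the maximum cardinality of an independent set. -/
noncomputable def indepNum {V : Type*} (G : SimpleGraph V) : ℕ :=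
  sSup {n | ∃ S : Finset V, IsIndepSet G ↑S ∧ S.card = n}

end ECG

/-! Choose for every vertex `v` an edge `edgeAt v` at `v` (possible since no vertex is
isolated). If `u ≠ v` are non-adjacent, then `edgeAt u` and `edgeAt v` can neither coincide nor
lie in a common clique, since either way `u` and `v` would be adjacent. So `edgeAt` maps
independent sets of `G` injectively onto independent sets of `K_e(G)`. -/

namespace ECG

variable {V : Type*} {G : SimpleGraph V}

lemma card_le_indepNum [Finite V] {S : Finset V} (hS : IsIndepSet G S) :
    S.card ≤ indepNum G := by
  have := Fintype.ofFinite V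
  exact le_csSup ⟨Fintype.card V, by rintro _ ⟨T, -, rfl⟩; exact T.card_le_univ⟩ ⟨S, hS, rfl⟩

lemma indepNum_le {n : ℕ} (h : ∀ S : Finset V, IsIndepSet G S → S.card ≤ n) :
    indepNum G ≤ n :=
  csSup_le ⟨0, ∅, by simp [IsIndepSet], rfl⟩ (by rintro _ ⟨S, hS, rfl⟩; exact h S hS)

lemma adj_of_mem_of_edgeCliqueGraph_adj {e f : G.edgeSet} {u v : V} (hu : u ∈ (e : Sym2 V))
    (hv : v ∈ (f : Sym2 V)) (huv : u ≠ v) (hef : (edgeCliqueGraph G).Adj e f) : G.Adj u v :=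
  hef.2 (Or.inl hu) (Or.inr hv) huv

lemma adj_of_mem_edge {e : G.edgeSet} {u v : V} (hu : u ∈ (e : Sym2 V))
    (hv : v ∈ (e : Sym2 V)) (huv : u ≠ v) : G.Adj u v :=
  G.adj_iff_exists_edge.2 ⟨huv, e, e.2, hu, hv⟩

section EdgeChoice

variable {edgeAt : V → G.edgeSet} (h_mem : ∀ v, v ∈ (edgeAt v : Sym2 V)) {S : Set V}
include h_mem

lemma IsIndepSet.injOn_edgeAt (hS : IsIndepSet G S) : S.InjOn edgeAt := by
  intro u hu v hv huv
  by_contra hne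
  exact hS hu hv hne (adj_of_mem_edge (huv ▸ h_mem u) (h_mem v) hne)

lemma IsIndepSet.image_edgeAt (hS : IsIndepSet G S) :
    IsIndepSet (edgeCliqueGraph G) (edgeAt '' S) := by
  rintro _ ⟨u, hu, rfl⟩ _ ⟨v, hv, rfl⟩ hne hadj
  have huv : u ≠ v := by rintro rfl; exact hne rfl
  exact hS hu hv huv (adj_of_mem_of_edgeCliqueGraph_adj (h_mem u) (h_mem v) huv hadj)

end EdgeChoice

theorem indepNum_le_indepNum_edgeCliqueGraph_of_forall_exists_adj [Finite V]
    (h : ∀ v, ∃ w, G.Adj v w) : indepNum G ≤ indepNum (edgeCliqueGraph G) := by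
  classical
  choose w hw using h
  let edgeAt : V → G.edgeSet := fun v ↦ ⟨s(v, w v), hw v⟩
  have h_mem : ∀ v, v ∈ (edgeAt v : Sym2 V) := fun v ↦ Sym2.mem_mk_left _ _
  refine indepNum_le fun S hS ↦ ?_
  calc S.card = (S.image edgeAt).card := (S.card_image_of_injOn (hS.injOn_edgeAt h_mem)).symm
    _ ≤ indepNum (edgeCliqueGraph G) :=
      card_le_indepNum (by simpa only [Finset.coe_image] using hS.image_edgeAt h_mem)

end ECG

/-- For a finite connected simple graph `G` with at least two vertices,
`α(G) ≤ α'(G)`: the independence number of `G` is at most the independence number of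
its edge-clique graph. -/
theorem indepNum_le_indepNum_edgeCliqueGraph {V : Type*} [Fintype V] [Nontrivial V]
    (G : SimpleGraph V) (hconn : G.Connected) :
    ECG.indepNum G ≤ ECG.indepNum (ECG.edgeCliqueGraph G) :=
  ECG.indepNum_le_indepNum_edgeCliqueGraph_of_forall_exists_adj
    hconn.preconnected.exists_adj_of_nontrivial
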